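/- Conservation of mass for the 2D fully discrete scheme: if ρ^{n+1} ∈ ℝ^{N_x×N_y} satisfies the 2D fully discrete scheme with data ρ^n ∈ ℝ^{N_x×N_y} and τ > 0, then Σ_{i=1}^{N_x} Σ_{j=1}^{N_y} h^x_i h^y_j ρ^{n+1}_{i,j} = Σ_{i=1}^{N_x} Σ_{j=1}^{N_y} h^x_i h^y_j ρ^n_{i,j}. -/

import Mathlib

/-
Multiplying the scheme in cell (i, j) by τ hˣᵢ hʸⱼ writes the change of mass in that cell as
τ times a discrete divergence hʸⱼ (C_{i+1/2,j} − C_{i−1/2,j}) + hˣᵢ (C_{i,j+1/2} − C_{i,j−1/2}).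
Summed over all cells, each direction telescopes to its two boundary fluxes, which vanish.
-/

open Finset

theorem sum_Icc_one_sub_pred {M : Type*} [AddCommGroup M] (f : ℕ → M) (N : ℕ) :
    ∑ i ∈ Icc 1 N, (f i - f (i - 1)) = f N - f 0 := by
  induction N with
  | zero => simp
  | succ n ih =>
    rw [sum_Icc_succ_top (by omega), ih]
    simp

theorem sum_Icc_one_sub_pred_eq_zero {M : Type*} [AddCommGroup M] {F : ℕ → M} {N : ℕ} (h0 : F 0 = 0) (hN : F N = 0) :
    ∑ i ∈ Icc 1 N, (F i - F (i - 1)) = 0 := by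
  rw [sum_Icc_one_sub_pred, h0, hN, sub_zero]

theorem sum_Icc_discrete_div_eq_zero {R : Type*} [Ring R] {Nx Ny : ℕ} (hx hy : ℕ → R)
    {Cx Cy : ℕ → ℕ → R}
    (hCx0 : ∀ j, Cx 0 j = 0) (hCxN : ∀ j, Cx Nx j = 0)
    (hCy0 : ∀ i, Cy i 0 = 0) (hCyN : ∀ i, Cy i Ny = 0) :
    ∑ i ∈ Icc 1 Nx, ∑ j ∈ Icc 1 Ny,
      (hy j * (Cx i j - Cx (i - 1) j) + hx i * (Cy i j - Cy i (j - 1))) = 0 := by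
  have flux_x : ∀ j, ∑ i ∈ Icc 1 Nx, (Cx i j - Cx (i - 1) j) = 0 := fun j =>
    sum_Icc_one_sub_pred_eq_zero (hCx0 j) (hCxN j)
  have flux_y : ∀ i, ∑ j ∈ Icc 1 Ny, (Cy i j - Cy i (j - 1)) = 0 := fun i =>
    sum_Icc_one_sub_pred_eq_zero (hCy0 i) (hCyN i)
  simp only [sum_add_distrib]
  rw [sum_comm (f := fun i j => hy j * (Cx i j - Cx (i - 1) j))]
  simp only [← mul_sum, flux_x, flux_y, mul_zero, sum_const_zero, add_zero]

theorem fully_discrete_mass_conservation_2d_general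
    (Nx Ny : ℕ)
    (hx : ℕ → ℝ) (hxpos : ∀ i ∈ Finset.Icc 1 Nx, 0 < hx i)
    (hy : ℕ → ℝ) (hypos : ∀ j ∈ Finset.Icc 1 Ny, 0 < hy j)
    (ρn ρ1 : ℕ → ℕ → ℝ) (τ : ℝ) (hτ : 0 < τ)
    (Cx Cy : ℕ → ℕ → ℝ)
    (hCx0 : ∀ j : ℕ, Cx 0 j = 0) (hCxN : ∀ j : ℕ, Cx Nx j = 0)
    (hCy0 : ∀ i : ℕ, Cy i 0 = 0) (hCyN : ∀ i : ℕ, Cy i Ny = 0)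
    (hscheme : ∀ i ∈ Finset.Icc 1 Nx, ∀ j ∈ Finset.Icc 1 Ny,
      (ρ1 i j - ρn i j) / τ = (Cx i j - Cx (i - 1) j) / hx i + (Cy i j - Cy i (j - 1)) / hy j)
 :
    ∑ i ∈ Finset.Icc 1 Nx, ∑ j ∈ Finset.Icc 1 Ny, hx i * hy j * ρ1 i j =
      ∑ i ∈ Finset.Icc 1 Nx, ∑ j ∈ Finset.Icc 1 Ny, hx i * hy j * ρn i j := by
  have mass_change : ∀ i ∈ Icc 1 Nx, ∀ j ∈ Icc 1 Ny,
      hx i * hy j * ρ1 i j - hx i * hy j * ρn i j =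
        τ * (hy j * (Cx i j - Cx (i - 1) j) + hx i * (Cy i j - Cy i (j - 1))) := by
    intro i hi j hj
    have h := hscheme i hi j hj
    field_simp [hτ.ne', (hxpos i hi).ne', (hypos j hj).ne'] at h
    linear_combination h
  rw [← sub_eq_zero, ← sum_sub_distrib]
  calc ∑ i ∈ Icc 1 Nx, (∑ j ∈ Icc 1 Ny, hx i * hy j * ρ1 i j - ∑ j ∈ Icc 1 Ny, hx i * hy j * ρn i j)
      = τ * ∑ i ∈ Icc 1 Nx, ∑ j ∈ Icc 1 Ny,
          (hy j * (Cx i j - Cx (i - 1) j) + hx i * (Cy i j - Cy i (j - 1))) := by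
        simp only [mul_sum, ← sum_sub_distrib]
        exact sum_congr rfl fun i hi => sum_congr rfl (mass_change i hi)
    _ = 0 := by rw [sum_Icc_discrete_div_eq_zero hx hy hCx0 hCxN hCy0 hCyN, mul_zero]

theorem fully_discrete_mass_conservation_2d
    (Nx Ny : ℕ) (hNx : 2 ≤ Nx) (hNy : 2 ≤ Ny)
    (hx : ℕ → ℝ) (hxpos : ∀ i ∈ Finset.Icc 1 Nx, 0 < hx i)
    (hy : ℕ → ℝ) (hypos : ∀ j ∈ Finset.Icc 1 Ny, 0 < hy j)
    (a c : ℝ)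
    (xhalf xc hxhalf : ℕ → ℝ) (yhalf yc hyhalf : ℕ → ℝ)
    (hxhalf0 : xhalf 0 = a)
    (hxhalfdef : ∀ i ∈ Finset.Icc 1 Nx, xhalf i = xhalf (i - 1) + hx i)
    (hxcdef : ∀ i ∈ Finset.Icc 1 Nx, xc i = xhalf (i - 1) + hx i / 2)
    (hhxhalf : ∀ i ∈ Finset.Icc 1 (Nx - 1), hxhalf i = (hx i + hx (i + 1)) / 2)
    (hyhalf0 : yhalf 0 = c)
    (hyhalfdef : ∀ j ∈ Finset.Icc 1 Ny, yhalf j = yhalf (j - 1) + hy j)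
    (hycdef : ∀ j ∈ Finset.Icc 1 Ny, yc j = yhalf (j - 1) + hy j / 2)
    (hhyhalf : ∀ j ∈ Finset.Icc 1 (Ny - 1), hyhalf j = (hy j + hy (j + 1)) / 2)
    (V W : ℝ → ℝ → ℝ)
    (Q : ℝ → ℝ → (ℕ → ℕ → ℝ) → ℝ)
    (hQ : ∀ (x y : ℝ) (v : ℕ → ℕ → ℝ), Q x y v =
      Real.exp (-V x y - ∑ k ∈ Finset.Icc 1 Nx, ∑ l ∈ Finset.Icc 1 Ny,
        hx k * hy l * W (xc k - x) (yc l - y) * v k l))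
    (ρn ρ1 : ℕ → ℕ → ℝ) (τ : ℝ) (hτ : 0 < τ)
    (Mn Mnxh Mnyh : ℕ → ℕ → ℝ)
    (hMn : ∀ i ∈ Finset.Icc 1 Nx, ∀ j ∈ Finset.Icc 1 Ny, Mn i j = Q (xc i) (yc j) ρn)
    (hMnxh : ∀ i ∈ Finset.Icc 1 (Nx - 1), ∀ j ∈ Finset.Icc 1 Ny,
      Mnxh i j = Q (xhalf i) (yc j) ρn)
    (hMnyh : ∀ i ∈ Finset.Icc 1 Nx, ∀ j ∈ Finset.Icc 1 (Ny - 1),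
      Mnyh i j = Q (xc i) (yhalf j) ρn)
    (Cx Cy : ℕ → ℕ → ℝ)
    (hCx : ∀ i ∈ Finset.Icc 1 (Nx - 1), ∀ j ∈ Finset.Icc 1 Ny,
      Cx i j = Mnxh i j / hxhalf i * (ρ1 (i + 1) j / Mn (i + 1) j - ρ1 i j / Mn i j))
    (hCy : ∀ i ∈ Finset.Icc 1 Nx, ∀ j ∈ Finset.Icc 1 (Ny - 1),
      Cy i j = Mnyh i j / hyhalf j * (ρ1 i (j + 1) / Mn i (j + 1) - ρ1 i j / Mn i j))
    (hCx0 : ∀ j : ℕ, Cx 0 j = 0) (hCxN : ∀ j : ℕ, Cx Nx j = 0)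
    (hCy0 : ∀ i : ℕ, Cy i 0 = 0) (hCyN : ∀ i : ℕ, Cy i Ny = 0)
    (hscheme : ∀ i ∈ Finset.Icc 1 Nx, ∀ j ∈ Finset.Icc 1 Ny,
      (ρ1 i j - ρn i j) / τ = (Cx i j - Cx (i - 1) j) / hx i + (Cy i j - Cy i (j - 1)) / hy j)
 :
    ∑ i ∈ Finset.Icc 1 Nx, ∑ j ∈ Finset.Icc 1 Ny, hx i * hy j * ρ1 i j =
      ∑ i ∈ Finset.Icc 1 Nx, ∑ j ∈ Finset.Icc 1 Ny, hx i * hy j * ρn i j :=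
  fully_discrete_mass_conservation_2d_general Nx Ny hx hxpos hy hypos ρn ρ1 τ hτ Cx Cy hCx0 hCxN
    hCy0 hCyN hscheme
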